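/- Let θ be a strictly positive stochastic matrix on a finite set Σ with stationary distribution q, and κ > 0 with θ(a,b) ≥ κ q(b) for all a,b. Let θ̂_n be the asynchronous updating matrix on Σ^n: θ̂_n(a,b) = (1/n) Σ_{i=1}^n θ(a_i,b_i) Π_{j≠i} 1[a_j = b_j]. Then for every probability distribution p on Σ^n, D(p θ̂_n ‖ q^{⊗n}) ≤ (1 − κ/n) D(p ‖ q^{⊗n}). -/

import Mathlib

open scoped BigOperators

/-- Kullback-Leibler divergence between two distributions on a finite set (real-valued). -/
noncomputable def Dkl {α : Type*} [Fintype α] (p q : α → ℝ) : ℝ :=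
  ∑ a, p a * Real.log (p a / q a)

/-!
Write `θ = κ • Q + (θ - κ • Q)` with `Q` the kernel that ignores its input and samples from `q`
(a Doeblin minorization). By joint convexity of relative entropy (the log-sum inequality),
updating coordinate `i` with `θ` brings `D(p ‖ q^{⊗n})` down to at most
`κ D(p_{-i} ‖ q^{⊗(n-1)}) + (1 - κ) D(p ‖ q^{⊗n})`, because resampling coordinate `i` from `q`
leaves exactly the divergence of the marginal `p_{-i}`. Averaging over `i`, Han's inequality
`∑ i, D(p_{-i} ‖ q^{⊗(n-1)}) ≤ (n - 1) D(p ‖ q^{⊗n})`, a consequence of the supermodularity of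
`A ↦ D(p_A ‖ q^{⊗A})`, yields the factor `1 - κ / n`.
-/

open Finset Matrix Real

theorem sub_le_mul_log_div {a b : ℝ} (ha : 0 ≤ a) (hb : 0 ≤ b) (hab : b = 0 → a = 0) :
    a - b ≤ a * log (a / b) := by
  rcases hb.eq_or_lt with rfl | hb
  · simp [hab rfl]
  calc a - b = b * (a / b - 1) := by field_simp
    _ ≤ b * (a / b * log (a / b)) := by
      gcongr; exact self_sub_one_le_mul_log (div_nonneg ha hb.le)
    _ = a * log (a / b) := by field_simp

theorem sum_mul_log_div_sum_le {ι : Type*} (s : Finset ι) {a b : ι → ℝ}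
    (ha : ∀ i ∈ s, 0 ≤ a i) (hb : ∀ i ∈ s, 0 ≤ b i) (hab : ∀ i ∈ s, b i = 0 → a i = 0) :
    (∑ i ∈ s, a i) * log ((∑ i ∈ s, a i) / ∑ i ∈ s, b i) ≤ ∑ i ∈ s, a i * log (a i / b i) := by
  set A := ∑ i ∈ s, a i
  set B := ∑ i ∈ s, b i
  rcases (sum_nonneg hb).eq_or_lt with hB | hB
  · have hA : A = 0 :=
      sum_eq_zero fun i hi => hab i hi ((sum_eq_zero_iff_of_nonneg hb).1 hB.symm i hi)
    have : ∀ i ∈ s, a i = 0 := (sum_eq_zero_iff_of_nonneg ha).1 hA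
    rw [hA, zero_mul, sum_eq_zero fun i hi => by simp [this i hi]]
  have key : ∀ i ∈ s, a i - b i * (A / B) ≤ a i * log (a i / b i) - a i * log (A / B) := by
    intro i hi
    have hAB : 0 ≤ A / B := div_nonneg (sum_nonneg ha) hB.le
    rcases (ha i hi).eq_or_lt with h0 | hai
    · rw [← h0]; simpa using mul_nonneg (hb i hi) hAB
    have hbi : b i ≠ 0 := fun h => hai.ne' (hab i hi h)
    have hA : A ≠ 0 := (hai.trans_le (single_le_sum ha hi)).ne'
    calc a i - b i * (A / B) ≤ a i * log (a i / (b i * (A / B))) :=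
          sub_le_mul_log_div (ha i hi) (mul_nonneg (hb i hi) hAB) fun h =>
            absurd h (mul_ne_zero hbi (div_ne_zero hA hB.ne'))
      _ = _ := by
        rw [← div_div, log_div (by positivity) (by positivity), mul_sub]
  have := sum_le_sum key
  rw [sum_sub_distrib, sum_sub_distrib, ← sum_mul, ← sum_mul, mul_div_cancel₀ _ hB.ne',
    sub_self] at this
  linarith

theorem dkl_sum_le {α ι : Type*} [Fintype α] (s : Finset ι) (f g : ι → α → ℝ)
    (hf : ∀ i ∈ s, ∀ x, 0 ≤ f i x) (hg : ∀ i ∈ s, ∀ x, 0 ≤ g i x)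
    (hfg : ∀ i ∈ s, ∀ x, g i x = 0 → f i x = 0) :
    Dkl (∑ i ∈ s, f i) (∑ i ∈ s, g i) ≤ ∑ i ∈ s, Dkl (f i) (g i) := by
  unfold Dkl
  rw [sum_comm]
  refine sum_le_sum fun x _ => ?_
  simp only [Finset.sum_apply]
  exact sum_mul_log_div_sum_le s (fun i hi => hf i hi x) (fun i hi => hg i hi x)
    fun i hi => hfg i hi x

theorem dkl_smul {α : Type*} [Fintype α] (c : ℝ) (f g : α → ℝ) :
    Dkl (c • f) (c • g) = c * Dkl f g := by
  rcases eq_or_ne c 0 with rfl | hc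
  · simp [Dkl]
  · simp only [Dkl, Pi.smul_apply, smul_eq_mul, mul_div_mul_left _ _ hc, mul_sum, mul_assoc]

theorem dkl_smul_smul_right {α : Type*} [Fintype α] (x y : ℝ) (r : α → ℝ) :
    Dkl (x • r) (y • r) = x * log (x / y) * ∑ b, r b := by
  simp only [Dkl, Pi.smul_apply, smul_eq_mul, mul_sum]
  refine sum_congr rfl fun b _ => ?_
  rcases eq_or_ne (r b) 0 with h | h
  · simp [h]
  · rw [mul_div_mul_right _ _ h]; ring

theorem dkl_sum_smul_le {α ι : Type*} [Fintype α] (s : Finset ι) (w : ι → ℝ) (f : ι → α → ℝ)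
    {Q : α → ℝ} (hw : ∀ i ∈ s, 0 ≤ w i) (hw1 : ∑ i ∈ s, w i = 1)
    (hf : ∀ i ∈ s, ∀ x, 0 ≤ f i x) (hQ : ∀ x, 0 < Q x) :
    Dkl (∑ i ∈ s, w i • f i) Q ≤ ∑ i ∈ s, w i * Dkl (f i) Q := by
  have hQs : ∑ i ∈ s, w i • Q = Q := by rw [← sum_smul, hw1, one_smul]
  calc Dkl (∑ i ∈ s, w i • f i) Q = Dkl (∑ i ∈ s, w i • f i) (∑ i ∈ s, w i • Q) := by rw [hQs]
    _ ≤ ∑ i ∈ s, Dkl (w i • f i) (w i • Q) :=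
      dkl_sum_le s _ _ (fun i hi x => mul_nonneg (hw i hi) (hf i hi x))
        (fun i hi x => mul_nonneg (hw i hi) (hQ x).le) fun i _ x h => by
          simp_all [(hQ x).ne']
    _ = ∑ i ∈ s, w i * Dkl (f i) Q := by simp only [dkl_smul]

theorem dkl_vecMul_le_of_minorization {α : Type*} [Fintype α] {T R : Matrix α α ℝ}
    {Q p : α → ℝ} {κ : ℝ} (hκ : 0 ≤ κ) (hR : ∀ a b, 0 ≤ R a b) (hRT : ∀ a b, κ * R a b ≤ T a b)
    (hT1 : ∀ a, ∑ b, T a b = 1) (hR1 : ∀ a, ∑ b, R a b = 1)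
    (hQ : ∀ a, 0 < Q a) (hQT : Q ᵥ* T = Q) (hQR : Q ᵥ* R = Q) (hp : ∀ a, 0 ≤ p a) :
    Dkl (p ᵥ* T) Q ≤ κ * Dkl (p ᵥ* R) Q + (1 - κ) * Dkl p Q := by
  set E := T - κ • R
  have hE : ∀ a b, 0 ≤ E a b := fun a b => by simp [E, hRT a b]
  have hE1 : ∀ a, ∑ b, E a b = 1 - κ := fun a => by
    simp [E, sum_sub_distrib, ← mul_sum, hT1, hR1]
  have hsplit : ∀ v : α → ℝ, v ᵥ* T = κ • (v ᵥ* R) + ∑ a, v a • E a := fun v => by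
    rw [← vecMul_eq_sum, ← vecMul_smul, ← vecMul_add, add_sub_cancel]
  -- `p ᵥ* T` and `Q = Q ᵥ* T` split alike: a `κ R` part, and one row of `T - κ R` per state.
  let f : Option α → α → ℝ := fun o => o.elim (κ • (p ᵥ* R)) fun a => p a • E a
  let g : Option α → α → ℝ := fun o => o.elim (κ • Q) fun a => Q a • E a
  have hf : p ᵥ* T = ∑ o, f o := by rw [Fintype.sum_option, hsplit]; rfl
  have hg : Q = ∑ o, g o := by
    rw [Fintype.sum_option]; conv_lhs => rw [← hQT, hsplit, hQR]
    rfl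
  calc Dkl (p ᵥ* T) Q = Dkl (∑ o, f o) (∑ o, g o) := by rw [← hf, ← hg]
    _ ≤ ∑ o, Dkl (f o) (g o) := by
      refine dkl_sum_le _ _ _ ?_ ?_ ?_
      · rintro (_ | a) - x
        · exact mul_nonneg hκ (sum_nonneg fun a _ => mul_nonneg (hp a) (hR a x))
        · exact mul_nonneg (hp a) (hE a x)
      · rintro (_ | a) - x
        · exact mul_nonneg hκ (hQ x).le
        · exact mul_nonneg (hQ a).le (hE a x)
      · rintro (_ | a) - x h
        · have hκ0 : κ = 0 := by simpa [g, (hQ x).ne'] using h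
          simp [f, hκ0]
        · have hE0 : E a x = 0 := by simpa [g, (hQ a).ne'] using h
          simp [f, hE0]
    _ = κ * Dkl (p ᵥ* R) Q + (1 - κ) * Dkl p Q := by
      rw [Fintype.sum_option]
      change Dkl (κ • (p ᵥ* R)) (κ • Q) + ∑ a, Dkl (p a • E a) (Q a • E a) = _
      simp only [dkl_smul, dkl_smul_smul_right, hE1]
      rw [← sum_mul, mul_comm (1 - κ)]
      rfl

theorem sum_erase_add_le_of_supermodular {ι : Type*} [Fintype ι] [DecidableEq ι]
    (F : Finset ι → ℝ) (hF : ∀ A B, A ∪ B = univ → F A + F B ≤ F (A ∩ B) + F univ) :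
    ∑ i, F (univ.erase i) + F univ ≤ Fintype.card ι * F univ + F ∅ := by
  suffices h : ∀ s : Finset ι, ∑ i ∈ s, F (univ.erase i) + F univ ≤ #s * F univ + F (univ \ s) by
    simpa using h univ
  intro s
  induction s using Finset.induction_on with
  | empty => simp
  | insert k s hk ih =>
    have h := hF (univ \ s) (univ.erase k) (by ext j; by_cases j = k <;> simp_all)
    have hinter : (univ \ s) ∩ univ.erase k = univ \ insert k s := by ext j; simp; tauto
    rw [hinter] at h
    rw [sum_insert hk, card_insert_of_notMem hk]
    push_cast
    linarith

section Coordinates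

variable {ι S : Type*} [Fintype ι] [DecidableEq ι]

theorem prod_apply_update {M : Type*} [CommMonoid M] (q : S → M) (b : ι → S) (i : ι) (s : S) :
    ∏ j, q (Function.update b i s j) = q s * ∏ j ∈ univ.erase i, q (b j) := by
  simp_rw [Function.apply_update (fun _ => q), prod_update_of_mem (mem_univ i),
    sdiff_singleton_eq_erase]

variable [DecidableEq S]

def coordUpdate (i : ι) (M : Matrix S S ℝ) : Matrix (ι → S) (ι → S) ℝ :=
  of fun a b => M (a i) (b i) * ∏ j ∈ univ.erase i, if a j = b j then 1 else 0

variable {i : ι} {M M' : Matrix S S ℝ}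

theorem coordUpdate_apply (a b : ι → S) :
    coordUpdate i M a b = if ∀ j ∈ univ.erase i, a j = b j then M (a i) (b i) else 0 := by
  simp [coordUpdate, prod_boole]

theorem coordUpdate_nonneg (hM : ∀ s t, 0 ≤ M s t) (a b : ι → S) : 0 ≤ coordUpdate i M a b := by
  rw [coordUpdate_apply]; split_ifs <;> simp [hM]

theorem mul_coordUpdate_le {κ : ℝ} (hM : ∀ s t, κ * M s t ≤ M' s t) (a b : ι → S) :
    κ * coordUpdate i M a b ≤ coordUpdate i M' a b := by
  rw [coordUpdate_apply, coordUpdate_apply]; split_ifs <;> simp [hM]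

variable [Fintype S]

theorem sum_filter_eqOn_erase {M : Type*} [AddCommMonoid M] (i : ι) (y : ι → S)
    (f : (ι → S) → M) :
    ∑ b with ∀ j ∈ univ.erase i, b j = y j, f b = ∑ s, f (Function.update y i s) := by
  have : ({b | ∀ j ∈ univ.erase i, b j = y j} : Finset (ι → S)) =
      univ.image (Function.update y i) := by
    ext b
    simp [eq_comm (b := b), Function.eq_update_iff]
  rw [this, sum_image fun s _ t _ h => Function.update_injective y i h]

theorem sum_coordUpdate (hM : ∀ s, ∑ t, M s t = 1) (a : ι → S) :
    ∑ b, coordUpdate i M a b = 1 := by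
  simp_rw [coordUpdate_apply, ← sum_filter, eq_comm (a := a _), sum_filter_eqOn_erase,
    Function.update_self, hM]

theorem vecMul_coordUpdate (v : (ι → S) → ℝ) (b : ι → S) :
    (v ᵥ* coordUpdate i M) b = ∑ s, v (Function.update b i s) * M s (b i) := by
  simp_rw [vecMul, dotProduct, coordUpdate_apply, mul_ite, mul_zero, ← sum_filter,
    sum_filter_eqOn_erase, Function.update_self]

theorem vecMul_coordUpdate_prod {q : S → ℝ} (hq : q ᵥ* M = q) :
    (fun a => ∏ j, q (a j)) ᵥ* coordUpdate i M = fun a => ∏ j, q (a j) := by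
  ext b
  simp_rw [vecMul_coordUpdate, prod_apply_update, mul_right_comm _ (∏ j ∈ _, _), ← sum_mul]
  rw [← mul_prod_erase univ (fun j => q (b j)) (mem_univ i), ← congrFun hq (b i)]
  rfl

end Coordinates

section Marginals

variable {ι S : Type*} [Fintype ι] [DecidableEq ι] [Fintype S] [DecidableEq S]
  {A B : Finset ι} {p : (ι → S) → ℝ}

def marginal (A : Finset ι) (p : (ι → S) → ℝ) (x : ι → S) : ℝ :=
  ∑ y with ∀ j ∈ A, y j = x j, p y

theorem marginal_congr {x x' : ι → S} (h : ∀ j ∈ A, x j = x' j) :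
    marginal A p x = marginal A p x' := by
  unfold marginal
  congr 1
  exact filter_congr fun y _ => forall₂_congr fun j hj => by rw [h j hj]

theorem le_marginal (hp : ∀ x, 0 ≤ p x) (x : ι → S) : p x ≤ marginal A p x :=
  single_le_sum (f := p) (fun y _ => hp y) (mem_filter.2 ⟨mem_univ x, fun _ _ => rfl⟩)

theorem marginal_univ (x : ι → S) : marginal univ p x = p x := by
  simp [marginal, ← funext_iff, filter_eq']

theorem marginal_empty (x : ι → S) : marginal ∅ p x = ∑ y, p y := by
  simp [marginal]

theorem marginal_erase (i : ι) (x : ι → S) :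
    marginal (univ.erase i) p x = ∑ s, p (Function.update x i s) :=
  sum_filter_eqOn_erase i x p

/-- Since `A ∪ B = univ`, the only `x` agreeing with `y` on `A` and with `z` on `B` is
`A.piecewise y z`, and it does so iff `y` and `z` agree on `A ∩ B`. -/
theorem sum_filter_marginal (hAB : A ∪ B = univ) (y : ι → S) :
    ∑ x with ∀ j ∈ A, x j = y j, marginal B p x = marginal (A ∩ B) p y := by
  unfold marginal
  rw [sum_comm' (t' := {z | ∀ j ∈ A ∩ B, z j = y j}) (s' := fun z => {A.piecewise y z})]
  · simp
  intro x z
  simp only [mem_filter, mem_univ, true_and, mem_singleton, mem_inter]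
  constructor
  · rintro ⟨hx, hz⟩
    refine ⟨funext fun j => ?_, fun j ⟨hjA, hjB⟩ => (hz j hjB).trans (hx j hjA)⟩
    by_cases hj : j ∈ A
    · simp [hj, hx j hj]
    · have hjB : j ∈ B := (mem_union.1 (by rw [hAB]; exact mem_univ j)).resolve_left hj
      simp [hj, hz j hjB]
  · rintro ⟨rfl, hz⟩
    refine ⟨fun j hj => by simp [hj], fun j hjB => ?_⟩
    by_cases hj : j ∈ A
    · simp [hj, hz j ⟨hj, hjB⟩]
    · simp [hj]

theorem sum_marginal_mul_marginal_div (hAB : A ∪ B = univ) (hp : ∀ x, 0 ≤ p x) :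
    ∑ x, marginal A p x * marginal B p x / marginal (A ∩ B) p x = ∑ x, p x := by
  calc ∑ x, marginal A p x * marginal B p x / marginal (A ∩ B) p x
      = ∑ x, ∑ y with ∀ j ∈ A, y j = x j, p y * (marginal B p x / marginal (A ∩ B) p x) :=
        sum_congr rfl fun x _ => by rw [mul_div_assoc, marginal, sum_mul]
    _ = ∑ y, ∑ x with ∀ j ∈ A, x j = y j, p y * (marginal B p x / marginal (A ∩ B) p x) :=
        sum_comm' fun x y => by simp only [mem_filter, mem_univ, true_and, and_true, eq_comm]
    _ = ∑ y, p y / marginal (A ∩ B) p y * ∑ x with ∀ j ∈ A, x j = y j, marginal B p x := by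
        refine sum_congr rfl fun y _ => ?_
        rw [mul_sum]
        refine sum_congr rfl fun x hx => ?_
        rw [marginal_congr fun j hj => (mem_filter.1 hx).2 j (mem_inter.1 hj).1]
        ring
    _ = ∑ y, p y := by
        refine sum_congr rfl fun y _ => ?_
        rw [sum_filter_marginal hAB]
        rcases (hp y).eq_or_lt with h | h
        · simp [← h]
        · exact div_mul_cancel₀ _ (h.trans_le (le_marginal hp y)).ne'

variable {q : S → ℝ}

/-- `D(p_A ‖ q^{⊗A})`, written as an expectation under `p` on the full product. -/
noncomputable def marginalDkl (A : Finset ι) (p : (ι → S) → ℝ) (q : S → ℝ) : ℝ :=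
  ∑ x, p x * log (marginal A p x / ∏ j ∈ A, q (x j))

theorem marginalDkl_univ : marginalDkl univ p q = Dkl p fun x => ∏ j, q (x j) := by
  simp [marginalDkl, marginal_univ, Dkl]

theorem marginalDkl_empty (hp1 : ∑ x, p x = 1) : marginalDkl ∅ p q = 0 := by
  simp [marginalDkl, marginal_empty, hp1]

theorem marginalDkl_add_le (hAB : A ∪ B = univ) (hp : ∀ x, 0 ≤ p x) (hq : ∀ s, 0 < q s) :
    marginalDkl A p q + marginalDkl B p q ≤ marginalDkl (A ∩ B) p q + marginalDkl univ p q := by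
  set r : (ι → S) → ℝ := fun x => marginal A p x * marginal B p x / marginal (A ∩ B) p x
  set L : Finset ι → (ι → S) → ℝ := fun C x => log (marginal C p x / ∏ j ∈ C, q (x j))
  have key : ∀ x, p x - r x ≤ p x * L (A ∩ B) x + p x * L univ x - p x * L A x - p x * L B x := by
    intro x
    rcases (hp x).eq_or_lt with h0 | hx
    · have hm : ∀ C : Finset ι, 0 ≤ marginal C p x := fun C => (hp x).trans (le_marginal hp x)
      rw [← h0]
      simpa [r] using div_nonneg (mul_nonneg (hm A) (hm B)) (hm (A ∩ B))
    have hm : ∀ C : Finset ι, 0 < marginal C p x := fun C => hx.trans_le (le_marginal hp x)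
    have hr : 0 < r x := div_pos (mul_pos (hm A) (hm B)) (hm _)
    have hQ : ∀ C : Finset ι, 0 < ∏ j ∈ C, q (x j) := fun C => prod_pos fun j _ => hq _
    have hprod : log (∏ j ∈ A, q (x j)) + log (∏ j ∈ B, q (x j)) =
        log (∏ j ∈ A ∩ B, q (x j)) + log (∏ j, q (x j)) := by
      rw [← log_mul (hQ A).ne' (hQ B).ne', ← log_mul (hQ _).ne' (hQ _).ne', ← prod_union_inter,
        hAB, mul_comm]
    have hlog : log (p x / r x) = L (A ∩ B) x + L univ x - L A x - L B x := by
      rw [log_div hx.ne' hr.ne']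
      simp only [r, L, marginal_univ]
      rw [log_div (mul_pos (hm A) (hm B)).ne' (hm _).ne', log_mul (hm A).ne' (hm B).ne']
      simp only [log_div (hm _).ne' (hQ _).ne', log_div hx.ne' (hQ _).ne']
      linarith
    calc p x - r x ≤ p x * log (p x / r x) :=
          sub_le_mul_log_div (hp x) hr.le fun h => absurd h hr.ne'
      _ = _ := by rw [hlog]; ring
  have hsum := sum_le_sum fun x (_ : x ∈ univ) => key x
  simp only [sum_sub_distrib, sum_add_distrib, r, sum_marginal_mul_marginal_div hAB hp,
    sub_self] at hsum
  simp only [marginalDkl]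
  linarith

theorem dkl_vecMul_coordUpdate_replicateRow (i : ι) (hq : ∀ s, 0 < q s) (hq1 : ∑ s, q s = 1) :
    Dkl (p ᵥ* coordUpdate i (replicateRow S q)) (fun x => ∏ j, q (x j)) =
      marginalDkl (univ.erase i) p q := by
  set R := coordUpdate i (replicateRow S q)
  set φ : (ι → S) → ℝ := fun x => log (marginal (univ.erase i) p x / ∏ j ∈ univ.erase i, q (x j))
  have hpR : ∀ b, (p ᵥ* R) b = q (b i) * marginal (univ.erase i) p b := fun b => by
    simp [R, vecMul_coordUpdate, marginal_erase, mul_sum, replicateRow, mul_comm]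
  have hφ : ∀ y s, φ (Function.update y i s) = φ y := fun y s => by
    simp only [φ, marginal_erase, Function.update_idem]
    congr 2
    exact prod_congr rfl fun j hj => by rw [Function.update_of_ne (ne_of_mem_erase hj)]
  have hRφ : R *ᵥ φ = φ := by
    ext y
    simp_rw [R, mulVec, dotProduct, coordUpdate_apply, ite_mul, zero_mul, ← sum_filter,
      eq_comm (a := y _), sum_filter_eqOn_erase, hφ, Function.update_self]
    simp [replicateRow, ← sum_mul, hq1]
  calc Dkl (p ᵥ* R) (fun x => ∏ j, q (x j)) = (p ᵥ* R) ⬝ᵥ φ := by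
        refine sum_congr rfl fun b _ => congrArg _ ?_
        show log (_ / ∏ j, q (b j)) = φ b
        rw [hpR, ← mul_prod_erase univ _ (mem_univ i), mul_div_mul_left _ _ (hq _).ne']
    _ = p ⬝ᵥ φ := by rw [← dotProduct_mulVec, hRφ]

theorem sum_marginalDkl_erase_le (hp : ∀ x, 0 ≤ p x) (hp1 : ∑ x, p x = 1) (hq : ∀ s, 0 < q s) :
    ∑ i, marginalDkl (univ.erase i) p q ≤
      (Fintype.card ι - 1) * Dkl p (fun x => ∏ j, q (x j)) := by
  have := sum_erase_add_le_of_supermodular (fun A => marginalDkl A p q) fun A B hAB =>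
    marginalDkl_add_le hAB hp hq
  simp only [marginalDkl_univ, marginalDkl_empty hp1, add_zero] at this
  linarith

end Marginals

section AsyncUpdate

variable {ι S : Type*} [Fintype ι] [DecidableEq ι] [Fintype S] [DecidableEq S]
  {M : Matrix S S ℝ} {p : (ι → S) → ℝ} {q : S → ℝ} {κ : ℝ}

noncomputable def asyncUpdate (M : Matrix S S ℝ) : Matrix (ι → S) (ι → S) ℝ :=
  (Fintype.card ι : ℝ)⁻¹ • ∑ i, coordUpdate i M

theorem dkl_vecMul_coordUpdate_le (i : ι) (hM1 : ∀ s, ∑ t, M s t = 1) (hqM : q ᵥ* M = q)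
    (hq : ∀ s, 0 < q s) (hq1 : ∑ s, q s = 1) (hκ : 0 ≤ κ) (hκM : ∀ s t, κ * q t ≤ M s t)
    (hp : ∀ x, 0 ≤ p x) :
    Dkl (p ᵥ* coordUpdate i M) (fun x => ∏ j, q (x j)) ≤
      κ * marginalDkl (univ.erase i) p q + (1 - κ) * Dkl p (fun x => ∏ j, q (x j)) := by
  have hqR : q ᵥ* replicateRow S q = q := funext fun t => by
    simp [vecMul, dotProduct, replicateRow, ← sum_mul, hq1]
  rw [← dkl_vecMul_coordUpdate_replicateRow i hq hq1]
  exact dkl_vecMul_le_of_minorization hκ (coordUpdate_nonneg fun _ t => (hq t).le)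
    (mul_coordUpdate_le hκM) (sum_coordUpdate hM1) (sum_coordUpdate fun _ => hq1)
    (fun x => prod_pos fun j _ => hq (x j)) (vecMul_coordUpdate_prod hqM)
    (vecMul_coordUpdate_prod hqR) hp

theorem dkl_vecMul_asyncUpdate_le [Nonempty ι] (hM1 : ∀ s, ∑ t, M s t = 1) (hqM : q ᵥ* M = q)
    (hq : ∀ s, 0 < q s) (hq1 : ∑ s, q s = 1) (hκ : 0 ≤ κ) (hκM : ∀ s t, κ * q t ≤ M s t)
    (hp : ∀ x, 0 ≤ p x) (hp1 : ∑ x, p x = 1) :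
    Dkl (p ᵥ* asyncUpdate M) (fun x => ∏ j, q (x j)) ≤
      (1 - κ / Fintype.card ι) * Dkl p (fun x => ∏ j, q (x j)) := by
  set n : ℝ := (Fintype.card ι : ℝ) with hn_def
  set D := Dkl p (fun x => ∏ j, q (x j))
  have hn : 0 < n := Nat.cast_pos.2 Fintype.card_pos
  have hM : ∀ s t, 0 ≤ M s t := fun s t => (mul_nonneg hκ (hq t).le).trans (hκM s t)
  calc Dkl (p ᵥ* asyncUpdate M) (fun x => ∏ j, q (x j))
      = Dkl (∑ i, n⁻¹ • (p ᵥ* coordUpdate i M)) (fun x => ∏ j, q (x j)) := by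
        rw [asyncUpdate, vecMul_smul, vecMul_sum, smul_sum]
    _ ≤ ∑ i, n⁻¹ * Dkl (p ᵥ* coordUpdate i M) (fun x => ∏ j, q (x j)) :=
        dkl_sum_smul_le _ _ _ (fun _ _ => by positivity) (by simp [n, hn.ne'])
          (fun i _ x => sum_nonneg fun a _ => mul_nonneg (hp a) (coordUpdate_nonneg hM a x))
          fun x => prod_pos fun j _ => hq (x j)
    _ ≤ ∑ i, n⁻¹ * (κ * marginalDkl (univ.erase i) p q + (1 - κ) * D) := by
        gcongr with i
        exact dkl_vecMul_coordUpdate_le i hM1 hqM hq hq1 hκ hκM hp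
    _ = κ / n * ∑ i, marginalDkl (univ.erase i) p q + (1 - κ) * D := by
        rw [← mul_sum, sum_add_distrib, ← mul_sum, sum_const, card_univ, nsmul_eq_mul, ← hn_def]
        field_simp
    _ ≤ κ / n * ((n - 1) * D) + (1 - κ) * D := by
        gcongr
        exact sum_marginalDkl_erase_le hp hp1 hq
    _ = (1 - κ / n) * D := by field_simp; ring

end AsyncUpdate

theorem stmt5_general {S : Type*} [Fintype S] [DecidableEq S] (n : ℕ) (hn : 0 < n)
    (θ : S → S → ℝ) (q : S → ℝ) (κ : ℝ)
    (hθ1 : ∀ a, ∑ b, θ a b = 1)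
    (hqpos : ∀ a, 0 < q a) (hq1 : ∑ a, q a = 1)
    (hstat : ∀ b, ∑ a, q a * θ a b = q b)
    (hκ : 0 < κ) (hκθ : ∀ a b, κ * q b ≤ θ a b)
    (p : (Fin n → S) → ℝ) (hp0 : ∀ a, 0 ≤ p a) (hp1 : ∑ a, p a = 1) :
    Dkl
      (fun b : Fin n → S => ∑ a, p a *
        ((1 / (n : ℝ)) * ∑ i, θ (a i) (b i) *
          ∏ j ∈ Finset.univ.erase i, (if a j = b j then (1 : ℝ) else 0)))
      (fun a : Fin n → S => ∏ i, q (a i))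
      ≤ (1 - κ / n) * Dkl p (fun a : Fin n → S => ∏ i, q (a i)) := by
  have : Nonempty (Fin n) := Fin.pos_iff_nonempty.1 hn
  have hK : (fun b : Fin n → S => ∑ a, p a *
        ((1 / (n : ℝ)) * ∑ i, θ (a i) (b i) *
          ∏ j ∈ Finset.univ.erase i, (if a j = b j then (1 : ℝ) else 0))) =
      p ᵥ* asyncUpdate θ := by
    ext b
    simp [vecMul, dotProduct, asyncUpdate, coordUpdate, Matrix.sum_apply]
  rw [hK]
  simpa using dkl_vecMul_asyncUpdate_le hθ1 (funext hstat) hqpos hq1 hκ.le hκθ hp0 hp1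

/-- Strong data processing inequality for asynchronous updating: with `θ`, `q`, `κ` as in the
synchronous case, and the asynchronous matrix
`θ̂_n(a,b) = (1/n) ∑ i, θ(a i, b i) ∏_{j ≠ i} 1[a j = b j]` on `S^n`,
every distribution `p` on `S^n` satisfies `D(p θ̂_n ‖ q^{⊗n}) ≤ (1 − κ/n) D(p ‖ q^{⊗n})`. -/
theorem stmt5 {S : Type*} [Fintype S] [DecidableEq S] (n : ℕ) (hn : 0 < n)
    (θ : S → S → ℝ) (q : S → ℝ) (κ : ℝ)
    (hθpos : ∀ a b, 0 < θ a b) (hθlt : ∀ a b, θ a b < 1)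
    (hθ1 : ∀ a, ∑ b, θ a b = 1)
    (hqpos : ∀ a, 0 < q a) (hqlt : ∀ a, q a < 1) (hq1 : ∑ a, q a = 1)
    (hstat : ∀ b, ∑ a, q a * θ a b = q b)
    (hκ : 0 < κ) (hκθ : ∀ a b, κ * q b ≤ θ a b)
    (p : (Fin n → S) → ℝ) (hp0 : ∀ a, 0 ≤ p a) (hp1 : ∑ a, p a = 1) :
    Dkl
      (fun b : Fin n → S => ∑ a, p a *
        ((1 / (n : ℝ)) * ∑ i, θ (a i) (b i) *
          ∏ j ∈ Finset.univ.erase i, (if a j = b j then (1 : ℝ) else 0)))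
      (fun a : Fin n → S => ∏ i, q (a i))
      ≤ (1 - κ / n) * Dkl p (fun a : Fin n → S => ∏ i, q (a i)) :=
  stmt5_general n hn θ q κ hθ1 hqpos hq1 hstat hκ hκθ p hp0 hp1
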